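/- Correctness of Feddy full pipeline: Let N ≥ 2, q = N, U finite. Users generate pairwise pads p(ν,μ) = s(ν,μ) - s(μ,ν) with s(ν,ν)=0, set p_ν = Σ_μ p(ν,μ), and mask y_ν = (1+N)^{x_ν} h^{p_ν} mod N² where h has order dividing N and x : U → ℕ with Σ x_ν < N. Then (((Π_ν y_ν) - 1 mod N²)/N) mod N = Σ_ν x_ν. -/

import Mathlib

/-!
The pads cancel in pairs, so `∑ ν, p ν = 0` in `ZMod N`; since the order of `h` divides `N`, the
masks `h ^ p ν` multiply to `1`. What remains is `(1 + N) ^ m` with `m = ∑ ν, x ν`, which equals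
`1 + m N` modulo `N²` because `N² = 0` there; for `m < N` this is already the reduced representative,
so the decoding formula returns `m`.
-/

open Finset

theorem one_add_pow_of_mul_self_eq_zero {R : Type*} [Semiring R] {a : R} (ha : a * a = 0)
    (m : ℕ) : (1 + a) ^ m = 1 + m * a := by
  induction m with
  | zero => simp
  | succ k ih =>
    rw [pow_succ, ih]
    simp only [add_mul, mul_add, one_mul, mul_one, mul_assoc, ha, mul_zero, Nat.cast_succ]
    abel

theorem ZMod.one_add_natCast_pow (N m : ℕ) :
    (1 + (N : ZMod (N ^ 2))) ^ m = ((m * N + 1 : ℕ) : ZMod (N ^ 2)) := by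
  have hNN : (N : ZMod (N ^ 2)) * N = 0 := by
    rw [← Nat.cast_mul, ← sq, ZMod.natCast_self]
  rw [one_add_pow_of_mul_self_eq_zero hNN]
  push_cast
  ring

theorem ZMod.decode_one_add_natCast_pow {N m : ℕ} (hm : m < N) :
    ((((1 + (N : ZMod (N ^ 2))) ^ m).val - 1) / N) % N = m := by
  obtain rfl | hN : N = 1 ∨ 2 ≤ N := by omega
  · -- `ZMod 1` is trivial: `val` is `0` and the truncated subtraction makes both sides `0`.
    obtain rfl : m = 0 := by omega
    exact Nat.mod_one _
  have hlt : m * N + 1 < N ^ 2 :=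
    calc m * N + 1 < (m + 1) * N := by rw [add_one_mul]; omega
      _ ≤ N ^ 2 := by rw [sq]; exact Nat.mul_le_mul_right N hm
  rw [ZMod.one_add_natCast_pow, ZMod.val_cast_of_lt hlt, Nat.add_sub_cancel,
    Nat.mul_div_cancel _ (by omega), Nat.mod_eq_of_lt hm]

theorem sum_sum_sub_swap {U A : Type*} [Fintype U] [AddCommGroup A] (s : U → U → A) :
    ∑ ν, ∑ μ, (s ν μ - s μ ν) = 0 := by
  simp only [sum_sub_distrib, sub_eq_zero]
  exact sum_comm

theorem prod_pow_val_eq_one {U G : Type*} [Fintype U] [CommMonoid G] {N : ℕ} [NeZero N] {h : G}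
    (hord : orderOf h ∣ N) {p : U → ZMod N} (hp : ∑ ν, p ν = 0) :
    ∏ ν, h ^ (p ν).val = 1 := by
  rw [prod_pow_eq_pow_sum, ← orderOf_dvd_iff_pow_eq_one]
  refine hord.trans ((ZMod.natCast_eq_zero_iff _ _).mp ?_)
  rwa [Nat.cast_sum, sum_congr rfl fun ν _ => ZMod.natCast_zmod_val (p ν)]

theorem stmt_18_general (N : ℕ) (U : Type) [Fintype U]
    (s : U → U → ZMod N)
    (pp : U → U → ZMod N) (hpp : ∀ ν μ, pp ν μ = s ν μ - s μ ν)
    (p : U → ZMod N) (hp : ∀ ν, p ν = ∑ μ : U, pp ν μ)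
    (h : (ZMod (N ^ 2))ˣ) (hord : orderOf h ∣ N)
    (x : U → ℕ) (hx : ∑ ν : U, x ν < N)
    (y : U → ZMod (N ^ 2))
    (hy : ∀ ν, y ν = (1 + (N : ZMod (N ^ 2))) ^ (x ν) * ((h ^ ((p ν).val) : (ZMod (N ^ 2))ˣ) : ZMod (N ^ 2))) :
    (((∏ ν : U, y ν).val - 1) / N) % N = ∑ ν : U, x ν := by
  have hpads : ∑ ν, p ν = 0 := by
    simpa only [hp, hpp] using sum_sum_sub_swap s
  have hmasks : ∏ ν, ((h ^ (p ν).val : (ZMod (N ^ 2))ˣ) : ZMod (N ^ 2)) = 1 := by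
    have : NeZero N := ⟨by omega⟩
    rw [← Units.coe_prod, prod_pow_val_eq_one hord hpads, Units.val_one]
  have hprod : ∏ ν, y ν = (1 + (N : ZMod (N ^ 2))) ^ ∑ ν, x ν := by
    rw [prod_congr rfl fun ν _ => hy ν, prod_mul_distrib, hmasks, mul_one, prod_pow_eq_pow_sum]
  rw [hprod, ZMod.decode_one_add_natCast_pow hx]

/-- Correctness of the full Feddy pipeline: pairwise pads, Paillier-style masking,
    and decoding recover the sum of the inputs. -/
theorem stmt_18 (N : ℕ) (hN : 2 ≤ N) (U : Type) [Fintype U]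
    (s : U → U → ZMod N) (hs : ∀ ν, s ν ν = 0)
    (pp : U → U → ZMod N) (hpp : ∀ ν μ, pp ν μ = s ν μ - s μ ν)
    (p : U → ZMod N) (hp : ∀ ν, p ν = ∑ μ : U, pp ν μ)
    (h : (ZMod (N ^ 2))ˣ) (hord : orderOf h ∣ N)
    (x : U → ℕ) (hx : ∑ ν : U, x ν < N)
    (y : U → ZMod (N ^ 2))
    (hy : ∀ ν, y ν = (1 + (N : ZMod (N ^ 2))) ^ (x ν) * ((h ^ ((p ν).val) : (ZMod (N ^ 2))ˣ) : ZMod (N ^ 2))) :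
    (((∏ ν : U, y ν).val - 1) / N) % N = ∑ ν : U, x ν :=
  stmt_18_general N U s pp hpp p hp h hord x hx y hy
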